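/- Let softmax : ℝⁿ → ℝⁿ be defined by softmax(x)ᵢ = e^{xᵢ} / Σⱼ e^{xⱼ}. Then softmax is 1-Lipschitz with respect to the Euclidean 2-norm: for all x, y ∈ ℝⁿ, ‖softmax(x) − softmax(y)‖ ≤ ‖x − y‖. -/

import Mathlib

open Matrix
open scoped RealInnerProductSpace

noncomputable section

/-- Identification of `Fin n → ℝ` with the Euclidean space ℝⁿ. -/
def toE {n : ℕ} (v : Fin n → ℝ) : EuclideanSpace ℝ (Fin n) :=
  (WithLp.equiv 2 _).symm v

/-- Matrix-vector multiplication on Euclidean space. -/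
def mulVecE {p q : ℕ} (A : Matrix (Fin p) (Fin q) ℝ) (x : EuclideanSpace ℝ (Fin q)) :
    EuclideanSpace ℝ (Fin p) := toE (A.mulVec (WithLp.equiv 2 _ x))

/-- Entrywise application of a scalar function σ to a vector of Euclidean space. -/
def mapE {n : ℕ} (σ : ℝ → ℝ) (x : EuclideanSpace ℝ (Fin n)) : EuclideanSpace ℝ (Fin n) :=
  toE (fun i => σ (WithLp.equiv 2 _ x i))

/-- softmax(x)ᵢ = e^{xᵢ} / Σⱼ e^{xⱼ} on Euclidean space. -/
def softmaxE {n : ℕ} (x : EuclideanSpace ℝ (Fin n)) : EuclideanSpace ℝ (Fin n) :=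
  toE (fun i => Real.exp (WithLp.equiv 2 _ x i) / ∑ j, Real.exp (WithLp.equiv 2 _ x j))

/-! Auxiliary material for the proof. -/

def smS {n : ℕ} (x : Fin n → ℝ) : ℝ := ∑ j, Real.exp (x j)

def sm {n : ℕ} (x : Fin n → ℝ) (i : Fin n) : ℝ := Real.exp (x i) / smS x

lemma smS_pos {n : ℕ} (hn : 0 < n) (x : Fin n → ℝ) : 0 < smS x := by
  have : Nonempty (Fin n) := ⟨⟨0, hn⟩⟩
  exact Finset.sum_pos (fun j _ => Real.exp_pos _) Finset.univ_nonempty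

lemma sm_nonneg {n : ℕ} (hn : 0 < n) (x : Fin n → ℝ) (i : Fin n) : 0 ≤ sm x i :=
  div_nonneg (Real.exp_pos _).le (smS_pos hn x).le

lemma sm_le_one {n : ℕ} (hn : 0 < n) (x : Fin n → ℝ) (i : Fin n) : sm x i ≤ 1 := by
  rw [sm, div_le_one (smS_pos hn x)]
  exact Finset.single_le_sum (fun j _ => (Real.exp_pos (x j)).le) (Finset.mem_univ i)

lemma sm_sum {n : ℕ} (hn : 0 < n) (x : Fin n → ℝ) : ∑ i, sm x i = 1 := by
  rw [show (∑ i, sm x i) = (∑ i, Real.exp (x i)) / smS x by rw [Finset.sum_div]; rfl]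
  exact div_self (smS_pos hn x).ne'

/-- The Jacobian of softmax, as a continuous linear map on `Fin n → ℝ`. -/
def smD {n : ℕ} (x : Fin n → ℝ) : (Fin n → ℝ) →L[ℝ] (Fin n → ℝ) :=
  ContinuousLinearMap.pi (fun i =>
    sm x i • (ContinuousLinearMap.proj i : (Fin n → ℝ) →L[ℝ] ℝ)
      - sm x i • (∑ j, sm x j • (ContinuousLinearMap.proj j : (Fin n → ℝ) →L[ℝ] ℝ)))

lemma smD_apply {n : ℕ} (x v : Fin n → ℝ) (i : Fin n) :
    smD x v i = sm x i * (v i - ∑ j, sm x j * v j) := by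
  simp [smD, ContinuousLinearMap.sum_apply, mul_sub]

lemma smD_hasFDerivAt {n : ℕ} (hn : 0 < n) (x : Fin n → ℝ) :
    HasFDerivAt (fun y : Fin n → ℝ => (fun i => Real.exp (y i) / smS y)) (smD x) x := by
  apply hasFDerivAt_pi''
  intro i
  have hSpos := smS_pos hn x
  have hS : HasFDerivAt smS
      (∑ j, Real.exp (x j) • (ContinuousLinearMap.proj j : (Fin n → ℝ) →L[ℝ] ℝ)) x :=
    HasFDerivAt.fun_sum fun j _ => (hasFDerivAt_apply j x).exp
  have hinv : HasFDerivAt (fun y : Fin n → ℝ => (smS y)⁻¹)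
      ((-(smS x ^ 2)⁻¹) •
        (∑ j, Real.exp (x j) • (ContinuousLinearMap.proj j : (Fin n → ℝ) →L[ℝ] ℝ))) x :=
    (hasDerivAt_inv hSpos.ne').comp_hasFDerivAt x hS
  have hexp : HasFDerivAt (fun y : Fin n → ℝ => Real.exp (y i))
      (Real.exp (x i) • (ContinuousLinearMap.proj i : (Fin n → ℝ) →L[ℝ] ℝ)) x :=
    (hasFDerivAt_apply i x).exp
  have hmul := hexp.mul hinv
  simp only [div_eq_mul_inv]
  refine hmul.congr_fderiv ?_
  symm
  ext v
  simp only [ContinuousLinearMap.coe_comp', Function.comp_apply, ContinuousLinearMap.add_apply,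
    ContinuousLinearMap.smul_apply, ContinuousLinearMap.sum_apply, ContinuousLinearMap.proj_apply,
    ContinuousLinearMap.sub_apply, smul_eq_mul, ContinuousLinearMap.coe_pi', smD_apply]
  rw [sm]
  have h1 : ∀ j : Fin n, Real.exp (x i) * (-(smS x ^ 2)⁻¹ * (Real.exp (x j) * v j))
      = -(Real.exp (x i) / smS x * (sm x j * v j)) := by
    intro j
    rw [sm, div_eq_mul_inv, div_eq_mul_inv, pow_two, mul_inv]
    ring
  rw [Finset.mul_sum, Finset.mul_sum]
  simp_rw [h1, Finset.sum_neg_distrib, ← Finset.mul_sum, div_eq_mul_inv]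
  ring

lemma key_sum_le {n : ℕ} (s v : Fin n → ℝ) (h0 : ∀ i, 0 ≤ s i) (h1 : ∀ i, s i ≤ 1)
    (hs : ∑ i, s i = 1) :
    ∑ i, (s i * (v i - ∑ j, s j * v j)) ^ 2 ≤ ∑ i, v i ^ 2 := by
  set m := ∑ j, s j * v j with hm
  have step1 : ∑ i, (s i * (v i - m)) ^ 2 ≤ ∑ i, s i * (v i - m) ^ 2 := by
    apply Finset.sum_le_sum
    intro i _
    have h : (s i * (v i - m)) ^ 2 = s i ^ 2 * (v i - m) ^ 2 := by ring
    rw [h]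
    have hsq : s i ^ 2 ≤ s i := by nlinarith [h0 i, h1 i]
    exact mul_le_mul_of_nonneg_right hsq (sq_nonneg _)
  have step2 : ∑ i, s i * (v i - m) ^ 2 = ∑ i, s i * v i ^ 2 - m ^ 2 := by
    have h : ∀ i : Fin n, s i * (v i - m) ^ 2
        = s i * v i ^ 2 - 2 * m * (s i * v i) + m ^ 2 * s i := fun i => by ring
    simp_rw [h]
    rw [Finset.sum_add_distrib, Finset.sum_sub_distrib, ← Finset.mul_sum, ← Finset.mul_sum,
      hs, ← hm]
    ring
  have step3 : ∑ i, s i * v i ^ 2 ≤ ∑ i, v i ^ 2 :=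
    Finset.sum_le_sum fun i _ => by nlinarith [h1 i, h0 i, sq_nonneg (v i)]
  nlinarith [sq_nonneg m]

/-- The Jacobian of softmax on Euclidean space. -/
def smDE {n : ℕ} (x : Fin n → ℝ) : EuclideanSpace ℝ (Fin n) →L[ℝ] EuclideanSpace ℝ (Fin n) :=
  ((EuclideanSpace.equiv (Fin n) ℝ).symm.toContinuousLinearMap.comp (smD x)).comp
    (EuclideanSpace.equiv (Fin n) ℝ).toContinuousLinearMap

lemma smDE_norm_le {n : ℕ} (hn : 0 < n) (x : Fin n → ℝ) : ‖smDE x‖ ≤ 1 := by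
  apply ContinuousLinearMap.opNorm_le_bound _ zero_le_one
  intro v
  rw [one_mul, EuclideanSpace.norm_eq, EuclideanSpace.norm_eq]
  apply Real.sqrt_le_sqrt
  have hv : ∀ i, smDE x v i = sm x i * ((fun j => v j) i - ∑ j, sm x j * (fun k => v k) j) :=
    fun i => smD_apply x (fun j => v j) i
  simp only [Real.norm_eq_abs, sq_abs]
  calc ∑ i, (smDE x v i) ^ 2
      = ∑ i, (sm x i * ((fun j => v j) i - ∑ j, sm x j * (fun k => v k) j)) ^ 2 := by
        simp_rw [hv]
    _ ≤ ∑ i, ((fun j => v j) i) ^ 2 :=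
        key_sum_le (sm x) (fun j => v j) (sm_nonneg hn x) (sm_le_one hn x) (sm_sum hn x)
    _ = ∑ i, (v i) ^ 2 := rfl

lemma softmaxE_hasFDerivAt {n : ℕ} (hn : 0 < n) (x : EuclideanSpace ℝ (Fin n)) :
    HasFDerivAt softmaxE (smDE (fun i => x i)) x := by
  have h := smD_hasFDerivAt hn (fun i => x i)
  have he : HasFDerivAt (fun z : EuclideanSpace ℝ (Fin n) => (fun i => z i) : _ → (Fin n → ℝ))
      (EuclideanSpace.equiv (Fin n) ℝ).toContinuousLinearMap x :=
    (EuclideanSpace.equiv (Fin n) ℝ).toContinuousLinearMap.hasFDerivAt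
  have hcomp := h.comp x he
  have hfinal :=
    ((EuclideanSpace.equiv (Fin n) ℝ).symm.toContinuousLinearMap.hasFDerivAt).comp x hcomp
  exact hfinal

/-- softmax is 1-Lipschitz with respect to the Euclidean 2-norm. -/
theorem softmax_one_lipschitz {n : ℕ} :
    ∀ x y : EuclideanSpace ℝ (Fin n), ‖softmaxE x - softmaxE y‖ ≤ ‖x - y‖ := by
  intro x y
  rcases Nat.eq_zero_or_pos n with hn | hn
  · subst hn
    have hxy : x = y := PiLp.ext fun i => i.elim0
    subst hxy
    simp
  · have h := convex_univ.norm_image_sub_le_of_norm_hasFDerivWithin_le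
      (f := softmaxE) (f' := fun z => smDE (fun i => z i)) (C := 1)
      (fun z _ => (softmaxE_hasFDerivAt hn z).hasFDerivWithinAt)
      (fun z _ => smDE_norm_le hn (fun i => z i))
      (Set.mem_univ y) (Set.mem_univ x)
    simpa using h
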